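/- Let 𝕄 := {Π : Π ∈ M(Π)} be the set of fixed points of the LP solution map. Then the supremum of Σ_{t=1}^{T-1} f_t(Π, Θ^Π_r, Q^Π_r) over Π ∈ 𝕄 equals (T-1) times the optimal value of the risk-sensitive constrained MDP, and any maximizer over 𝕄 is an optimal policy of the constrained MDP. -/
import Mathlib


open Finset Real MeasureTheory

noncomputable section

variable {S A : Type*} [Fintype S] [Fintype A] [DecidableEq S] [DecidableEq A]

namespace RiskCMDP

/-- Probability weight of a full trajectory `(s, a)` of `N` transitions under policy `d`,
kernel `p` and initial distribution `α`. -/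
def trajWeight (N : ℕ) (α : S → ℝ) (d : ℕ → S → A → ℝ) (p : ℕ → S → A → S → ℝ)
    (s : Fin (N+1) → S) (a : Fin N → A) : ℝ :=
  α (s 0) * ∏ k : Fin N, d k (s k.castSucc) (a k) * p k (s k.castSucc) (a k) (s k.succ)

/-- Accumulated cost of a full trajectory, including terminal cost. -/
def totalCost (N : ℕ) (m : ℕ → S → A → S → ℝ) (mT : S → ℝ)
    (s : Fin (N+1) → S) (a : Fin N → A) : ℝ :=
  (∑ k : Fin N, m k (s k.castSucc) (a k) (s k.succ)) + mT (s (Fin.last N))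

/-- Risk-sensitive value `J_m(Π, α) = E[exp(Σ m_t + m_T)]`. -/
def J (N : ℕ) (α : S → ℝ) (d : ℕ → S → A → ℝ) (p : ℕ → S → A → S → ℝ)
    (m : ℕ → S → A → S → ℝ) (mT : S → ℝ) : ℝ :=
  ∑ s : Fin (N+1) → S, ∑ a : Fin N → A,
    trajWeight N α d p s a * Real.exp (totalCost N m mT s a)

/-- Forward factor `θ^Π_{m,t}(x) = E[exp(Σ_{k<t} m_k) 1{X_t = x}]` (0-based time `t`). -/
def theta (α : S → ℝ) (d : ℕ → S → A → ℝ) (p : ℕ → S → A → S → ℝ)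
    (m : ℕ → S → A → S → ℝ) (t : ℕ) (x : S) : ℝ :=
  ∑ s : Fin (t+1) → S, ∑ a : Fin t → A,
    (if s (Fin.last t) = x then
      α (s 0) * ∏ k : Fin t, (d k (s k.castSucc) (a k) * p k (s k.castSucc) (a k) (s k.succ)
        * Real.exp (m k (s k.castSucc) (a k) (s k.succ)))
     else 0)

/-- Backward factor with `r` remaining transitions (absolute time `N - r`). -/
def Qaux (N : ℕ) (d : ℕ → S → A → ℝ) (p : ℕ → S → A → S → ℝ)
    (m : ℕ → S → A → S → ℝ) (mT : S → ℝ) : ℕ → S → A → ℝ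
  | 0, x, _ => Real.exp (mT x)
  | (r+1), x, a =>
      ∑ x' : S, ∑ a' : A,
        Real.exp (m (N - (r+1)) x a x') * p (N - (r+1)) x a x'
          * d (N - r) x' a' * Qaux N d p m mT r x' a'

/-- Backward factor `Q^Π_{m,t}(x,a)` at (0-based) time `t ≤ N`. -/
def Qb (N : ℕ) (d : ℕ → S → A → ℝ) (p : ℕ → S → A → S → ℝ)
    (m : ℕ → S → A → S → ℝ) (mT : S → ℝ) (t : ℕ) (x : S) (a : A) : ℝ :=
  Qaux N d p m mT (N - t) x a

/-- `f_t(Π̃, Θ^Π_m, Q^Π_m) = Σ_{x,a} θ^Π_{m,t}(x) d̃_t(x,a) Q^Π_{m,t}(x,a)`. -/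
def fF (N : ℕ) (α : S → ℝ) (d dtil : ℕ → S → A → ℝ) (p : ℕ → S → A → S → ℝ)
    (m : ℕ → S → A → S → ℝ) (mT : S → ℝ) (t : ℕ) : ℝ :=
  ∑ x : S, ∑ a : A, theta α d p m t x * dtil t x a * Qb N d p m mT t x a

/-- A Markovian randomized policy. -/
def isPolicy (d : ℕ → S → A → ℝ) : Prop :=
  (∀ t x a, 0 ≤ d t x a) ∧ ∀ t x, ∑ a : A, d t x a = 1

/-- A transition kernel. -/
def isKernel (p : ℕ → S → A → S → ℝ) : Prop :=
  (∀ t x a x', 0 ≤ p t x a x') ∧ ∀ t x a, ∑ x' : S, p t x a x' = 1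

/-- A probability distribution on states. -/
def isDist (α : S → ℝ) : Prop := (∀ x, 0 ≤ α x) ∧ ∑ x : S, α x = 1

/-- The one-step modification `η^t_{Π,Π̃}`: follow `d` except at epoch `t`, where `dtil` is used. -/
def update (d dtil : ℕ → S → A → ℝ) (t : ℕ) : ℕ → S → A → ℝ :=
  fun k => if k = t then dtil k else d k

/-- Feasibility for the risk-sensitive constrained MDP. -/
def feasible (N : ℕ) (αc : S → ℝ) (p : ℕ → S → A → S → ℝ) (c : ℕ → S → A → S → ℝ)
    (cT : S → ℝ) (B : ℝ) (d : ℕ → S → A → ℝ) : Prop :=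
  isPolicy d ∧ J N αc d p c cT ≤ B

/-- Optimality for the risk-sensitive constrained MDP. -/
def optimalCMDP (N : ℕ) (αr αc : S → ℝ) (p : ℕ → S → A → S → ℝ)
    (r c : ℕ → S → A → S → ℝ) (rT cT : S → ℝ) (B : ℝ) (d : ℕ → S → A → ℝ) : Prop :=
  feasible N αc p c cT B d ∧
    ∀ d', feasible N αc p c cT B d' → J N αr d' p r rT ≤ J N αr d p r rT

/-- Feasibility for the linear program `LP(Π)` with base policy `base`. -/
def LPfeas (N : ℕ) (αc : S → ℝ) (base : ℕ → S → A → ℝ) (p : ℕ → S → A → S → ℝ)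
    (c : ℕ → S → A → S → ℝ) (cT : S → ℝ) (B : ℝ) (dtil : ℕ → S → A → ℝ) : Prop :=
  isPolicy dtil ∧ ∀ t, t < N → fF N αc base dtil p c cT t ≤ B

/-- Objective of `LP(Π)`: `Σ_t f_t(Π̃, Θ^Π_r, Q^Π_r)`. -/
def LPobj (N : ℕ) (αr : S → ℝ) (base dtil : ℕ → S → A → ℝ) (p : ℕ → S → A → S → ℝ)
    (r : ℕ → S → A → S → ℝ) (rT : S → ℝ) : ℝ :=
  ∑ t ∈ Finset.range N, fF N αr base dtil p r rT t

/-- `dtil ∈ M(base)`: `dtil` is an optimal solution of `LP(base)`. -/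
def LPopt (N : ℕ) (αr αc : S → ℝ) (base : ℕ → S → A → ℝ) (p : ℕ → S → A → S → ℝ)
    (r c : ℕ → S → A → S → ℝ) (rT cT : S → ℝ) (B : ℝ) (dtil : ℕ → S → A → ℝ) : Prop :=
  LPfeas N αc base p c cT B dtil ∧
    ∀ d', LPfeas N αc base p c cT B d' →
      LPobj N αr base d' p r rT ≤ LPobj N αr base dtil p r rT

/-- The set `𝕄` of fixed points: `Π ∈ M(Π)`. -/
def isFix (N : ℕ) (αr αc : S → ℝ) (p : ℕ → S → A → S → ℝ) (r c : ℕ → S → A → S → ℝ)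
    (rT cT : S → ℝ) (B : ℝ) (d : ℕ → S → A → ℝ) : Prop :=
  LPopt N αr αc d p r c rT cT B d

/-! ### Auxiliary lemmas -/

lemma sum_snoc {n : ℕ} {β : Type*} [Fintype β] (g : (Fin (n+1) → β) → ℝ) :
    ∑ s : Fin (n+1) → β, g s = ∑ x : β, ∑ sp : Fin n → β, g (Fin.snoc sp x) := by
  rw [← (Fin.snocEquiv (fun _ => β)).sum_comp g, Fintype.sum_prod_type]
  rfl

lemma sum_theta_mul (α : S → ℝ) (d : ℕ → S → A → ℝ) (p : ℕ → S → A → S → ℝ)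
    (m : ℕ → S → A → S → ℝ) (t : ℕ) (G : S → ℝ) :
    ∑ x : S, theta α d p m t x * G x =
      ∑ sp : Fin (t+1) → S, ∑ ap : Fin t → A,
        (α (sp 0) * ∏ k : Fin t, (d k (sp k.castSucc) (ap k) * p k (sp k.castSucc) (ap k) (sp k.succ)
          * Real.exp (m k (sp k.castSucc) (ap k) (sp k.succ)))) * G (sp (Fin.last t)) := by
  simp only [theta, Finset.sum_mul, ite_mul, zero_mul]
  rw [Finset.sum_comm]
  refine Finset.sum_congr rfl fun sp _ => ?_
  rw [Finset.sum_comm]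
  refine Finset.sum_congr rfl fun ap _ => ?_
  simp

lemma J_eq_theta_pair (N : ℕ) (α : S → ℝ) (d : ℕ → S → A → ℝ) (p : ℕ → S → A → S → ℝ)
    (m : ℕ → S → A → S → ℝ) (mT : S → ℝ) :
    J N α d p m mT = ∑ x : S, theta α d p m N x * Real.exp (mT x) := by
  rw [sum_theta_mul]
  simp only [J, trajWeight, totalCost]
  refine Finset.sum_congr rfl fun s _ => Finset.sum_congr rfl fun a _ => ?_
  rw [Real.exp_add, Real.exp_sum]
  simp only [Finset.prod_mul_distrib]
  ring

lemma theta_succ (α : S → ℝ) (d : ℕ → S → A → ℝ) (p : ℕ → S → A → S → ℝ)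
    (m : ℕ → S → A → S → ℝ) (t : ℕ) (x' : S) :
    theta α d p m (t+1) x' =
      ∑ x : S, theta α d p m t x *
        ∑ a : A, d t x a * p t x a x' * Real.exp (m t x a x') := by
  rw [sum_theta_mul]
  show theta α d p m (t+1) x' = _
  rw [theta, sum_snoc]
  rw [Finset.sum_eq_single x' (fun b _ hb => by
        refine Finset.sum_eq_zero fun sp _ => Finset.sum_eq_zero fun a _ => ?_
        rw [if_neg]; rw [Fin.snoc_last]; exact hb)
      (fun h => absurd (Finset.mem_univ x') h)]
  refine Finset.sum_congr rfl fun sp _ => ?_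
  rw [sum_snoc (n := t) (β := A), Finset.sum_comm]
  refine Finset.sum_congr rfl fun ap _ => ?_
  rw [Finset.mul_sum]
  refine Finset.sum_congr rfl fun aN _ => ?_
  rw [if_pos (by rw [Fin.snoc_last])]
  rw [Fin.prod_univ_castSucc]
  have h0 : (Fin.snoc sp x' : Fin (t+2) → S) 0 = sp 0 := by
    rw [← Fin.castSucc_zero, Fin.snoc_castSucc]
  simp only [h0, Fin.snoc_castSucc, Fin.snoc_last, Fin.succ_castSucc, Fin.succ_last,
    Fin.coe_castSucc, Fin.val_last]
  ring

lemma Qb_succ (N t : ℕ) (ht : t < N) (d : ℕ → S → A → ℝ) (p : ℕ → S → A → S → ℝ)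
    (m : ℕ → S → A → S → ℝ) (mT : S → ℝ) (x : S) (a : A) :
    Qb N d p m mT t x a =
      ∑ x' : S, ∑ a' : A, Real.exp (m t x a x') * p t x a x'
        * d (t+1) x' a' * Qb N d p m mT (t+1) x' a' := by
  obtain ⟨u, hu⟩ : ∃ u, N - t = u + 1 := ⟨N - t - 1, by omega⟩
  rw [Qb, hu]
  show (∑ x' : S, ∑ a' : A, Real.exp (m (N - (u+1)) x a x') * p (N - (u+1)) x a x'
        * d (N - u) x' a' * Qaux N d p m mT u x' a') = _
  have h1 : N - (u + 1) = t := by omega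
  have h2 : N - u = t + 1 := by omega
  have h3 : u = N - (t + 1) := by omega
  rw [h1, h2, h3]
  rfl

lemma sum4_comm (f : S → A → S → A → ℝ) :
    ∑ x : S, ∑ a : A, ∑ x' : S, ∑ a' : A, f x a x' a'
      = ∑ x' : S, ∑ a' : A, ∑ x : S, ∑ a : A, f x a x' a' := by
  rw [show (∑ x : S, ∑ a : A, ∑ x' : S, ∑ a' : A, f x a x' a')
        = ∑ q : S × A, ∑ q' : S × A, f q.1 q.2 q'.1 q'.2 by
      simp only [Fintype.sum_prod_type],
    show (∑ x' : S, ∑ a' : A, ∑ x : S, ∑ a : A, f x a x' a')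
        = ∑ q' : S × A, ∑ q : S × A, f q.1 q.2 q'.1 q'.2 by
      simp only [Fintype.sum_prod_type],
    Finset.sum_comm]

lemma pair_step (N t : ℕ) (ht : t < N) (α : S → ℝ) (d : ℕ → S → A → ℝ)
    (p : ℕ → S → A → S → ℝ) (m : ℕ → S → A → S → ℝ) (mT : S → ℝ) :
    (∑ x : S, ∑ a : A, theta α d p m t x * d t x a * Qb N d p m mT t x a)
      = ∑ x : S, ∑ a : A, theta α d p m (t+1) x * d (t+1) x a * Qb N d p m mT (t+1) x a := by
  have := fun x a => Qb_succ N t ht d p m mT x a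
  calc (∑ x : S, ∑ a : A, theta α d p m t x * d t x a * Qb N d p m mT t x a)
      = ∑ x : S, ∑ a : A, ∑ x' : S, ∑ a' : A,
          theta α d p m t x * d t x a * (Real.exp (m t x a x') * p t x a x'
            * d (t+1) x' a' * Qb N d p m mT (t+1) x' a') := by
        refine Finset.sum_congr rfl fun x _ => Finset.sum_congr rfl fun a _ => ?_
        rw [this x a, Finset.mul_sum]
        exact Finset.sum_congr rfl fun x' _ => by rw [Finset.mul_sum]
    _ = ∑ x' : S, ∑ a' : A, ∑ x : S, ∑ a : A,
          theta α d p m t x * d t x a * (Real.exp (m t x a x') * p t x a x'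
            * d (t+1) x' a' * Qb N d p m mT (t+1) x' a') := sum4_comm _
    _ = ∑ x : S, ∑ a : A, theta α d p m (t+1) x * d (t+1) x a * Qb N d p m mT (t+1) x a := by
        refine Finset.sum_congr rfl fun x' _ => Finset.sum_congr rfl fun a' _ => ?_
        rw [theta_succ]
        simp only [Finset.sum_mul, Finset.mul_sum]
        refine Finset.sum_congr rfl fun x _ => Finset.sum_congr rfl fun a _ => by ring

lemma pair_eq_J (N : ℕ) (α : S → ℝ) (d : ℕ → S → A → ℝ) (p : ℕ → S → A → S → ℝ)
    (m : ℕ → S → A → S → ℝ) (mT : S → ℝ) (hd : ∀ x : S, ∑ a : A, d N x a = 1) :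
    ∀ k t, t + k = N →
      (∑ x : S, ∑ a : A, theta α d p m t x * d t x a * Qb N d p m mT t x a)
        = J N α d p m mT := by
  intro k
  induction k with
  | zero =>
      intro t htN
      have ht : t = N := by omega
      rw [ht]
      have hQ : ∀ (x : S) (a : A), Qb N d p m mT N x a = Real.exp (mT x) := by
        intro x a; simp only [Qb, Nat.sub_self]; rfl
      rw [J_eq_theta_pair]
      refine Finset.sum_congr rfl fun x _ => ?_
      simp only [hQ]
      rw [show (∑ a : A, theta α d p m N x * d N x a * Real.exp (mT x))
            = (theta α d p m N x * Real.exp (mT x)) * ∑ a : A, d N x a by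
          rw [Finset.mul_sum]; exact Finset.sum_congr rfl fun a _ => by ring]
      rw [hd x, mul_one]
  | succ k ih =>
      intro t htN
      rw [pair_step N t (by omega)]
      exact ih (t+1) (by omega)

lemma J_eq_fF (N t : ℕ) (ht : t < N) (α : S → ℝ) (d : ℕ → S → A → ℝ)
    (p : ℕ → S → A → S → ℝ) (m : ℕ → S → A → S → ℝ) (mT : S → ℝ)
    (hd : ∀ x : S, ∑ a : A, d N x a = 1) :
    fF N α d d p m mT t = J N α d p m mT :=
  pair_eq_J N α d p m mT hd (N - t) t (by omega)

lemma theta_congr (α : S → ℝ) (d1 d2 : ℕ → S → A → ℝ) (p : ℕ → S → A → S → ℝ)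
    (m : ℕ → S → A → S → ℝ) (t : ℕ) (h : ∀ k, k < t → d1 k = d2 k) (x : S) :
    theta α d1 p m t x = theta α d2 p m t x := by
  simp only [theta]
  refine Finset.sum_congr rfl fun s _ => Finset.sum_congr rfl fun a _ => ?_
  refine if_congr Iff.rfl ?_ rfl
  congr 1
  exact Finset.prod_congr rfl fun k _ => by rw [h k k.isLt]

lemma Qaux_congr (N : ℕ) (d1 d2 : ℕ → S → A → ℝ) (p : ℕ → S → A → S → ℝ)
    (m : ℕ → S → A → S → ℝ) (mT : S → ℝ) :
    ∀ r, r ≤ N → (∀ k, N - r < k → d1 k = d2 k) → ∀ (x : S) (a : A),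
      Qaux N d1 p m mT r x a = Qaux N d2 p m mT r x a := by
  intro r
  induction r with
  | zero => intro _ _ x a; rfl
  | succ r ih =>
      intro hr h x a
      show (∑ x' : S, ∑ a' : A, _) = _
      refine Finset.sum_congr rfl fun x' _ => Finset.sum_congr rfl fun a' _ => ?_
      rw [h (N - r) (by omega), ih (by omega) (fun k hk => h k (by omega)) x' a']

lemma fF_update (N t : ℕ) (ht : t < N) (α : S → ℝ) (base dtil : ℕ → S → A → ℝ)
    (p : ℕ → S → A → S → ℝ) (m : ℕ → S → A → S → ℝ) (mT : S → ℝ)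
    (hbase : ∀ x : S, ∑ a : A, base N x a = 1) :
    fF N α base dtil p m mT t = J N α (update base dtil t) p m mT := by
  have hupdN : ∀ x : S, ∑ a : A, update base dtil t N x a = 1 := by
    intro x
    simp only [update, if_neg (by omega : ¬ N = t)]
    exact hbase x
  rw [← J_eq_fF N t ht α (update base dtil t) p m mT hupdN]
  simp only [fF]
  refine Finset.sum_congr rfl fun x _ => Finset.sum_congr rfl fun a _ => ?_
  have h1 : theta α base p m t x = theta α (update base dtil t) p m t x :=
    theta_congr α base (update base dtil t) p m t
      (fun k hk => by simp [update, if_neg (by omega : ¬ k = t)]) x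
  have h2 : Qb N base p m mT t x a = Qb N (update base dtil t) p m mT t x a := by
    simp only [Qb]
    refine Qaux_congr N base (update base dtil t) p m mT (N - t) (by omega)
      (fun k hk => ?_) x a
    have : ¬ k = t := by omega
    simp [update, this]
  have h3 : dtil t x a = update base dtil t t x a := by simp [update]
  rw [h1, h2, h3]

/-- the supremum of `Σ_t f_t(Π, Θ^Π_r, Q^Π_r)` over `Π ∈ 𝕄` equals `(T-1)`
times the optimal value of the constrained MDP (and is attained), and any maximizer over
`𝕄` is an optimal policy of the constrained MDP. -/
theorem GF_equivalence (N : ℕ) (hN : 0 < N) (αr αc : S → ℝ) (p : ℕ → S → A → S → ℝ)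
    (r c : ℕ → S → A → S → ℝ) (rT cT : S → ℝ) (B : ℝ)
    (hp : isKernel p) (hαr : isDist αr) (hαc : isDist αc)
    (dstar : ℕ → S → A → ℝ)
    (hopt : optimalCMDP N αr αc p r c rT cT B dstar) :
    IsGreatest
      ((fun d => LPobj N αr d d p r rT) ''
        {d : ℕ → S → A → ℝ | isFix N αr αc p r c rT cT B d})
      ((N : ℝ) * J N αr dstar p r rT) ∧
    ∀ d, isFix N αr αc p r c rT cT B d →
      LPobj N αr d d p r rT = (N : ℝ) * J N αr dstar p r rT →
      optimalCMDP N αr αc p r c rT cT B d := by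
  have hpol : isPolicy dstar := hopt.1.1
  -- f_t(Π, Θ^Π, Q^Π) = J(Π) for any policy Π
  have key_self : ∀ (d : ℕ → S → A → ℝ), isPolicy d → ∀ (αm : S → ℝ) m mT t, t < N →
      fF N αm d d p m mT t = J N αm d p m mT :=
    fun d hd αm m mT t ht => J_eq_fF N t ht αm d p m mT (fun x => hd.2 N x)
  -- f_t(Π̃, Θ^Π, Q^Π) = J(η^t_{Π,Π̃})
  have key_upd : ∀ (base dtil : ℕ → S → A → ℝ), isPolicy base → ∀ (αm : S → ℝ) m mT t, t < N →
      fF N αm base dtil p m mT t = J N αm (update base dtil t) p m mT :=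
    fun base dtil hb αm m mT t ht => fF_update N t ht αm base dtil p m mT (fun x => hb.2 N x)
  have LPobj_self : ∀ d : ℕ → S → A → ℝ, isPolicy d →
      LPobj N αr d d p r rT = (N : ℝ) * J N αr d p r rT := by
    intro d hd
    unfold LPobj
    rw [Finset.sum_congr rfl (fun t ht => key_self d hd αr r rT t (Finset.mem_range.mp ht)),
      Finset.sum_const, Finset.card_range, nsmul_eq_mul]
  have feas_of_fix : ∀ d, isFix N αr αc p r c rT cT B d → feasible N αc p c cT B d := by
    intro d hd
    refine ⟨hd.1.1, ?_⟩
    have h0 := hd.1.2 0 hN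
    rwa [key_self d hd.1.1 αc c cT 0 hN] at h0
  have hfixstar : isFix N αr αc p r c rT cT B dstar := by
    constructor
    · exact ⟨hpol, fun t ht => by
        rw [key_self dstar hpol αc c cT t ht]; exact hopt.1.2⟩
    · intro d' hd'
      unfold LPobj
      refine Finset.sum_le_sum fun t ht => ?_
      have htN := Finset.mem_range.mp ht
      rw [key_self dstar hpol αr r rT t htN, key_upd dstar d' hpol αr r rT t htN]
      refine hopt.2 _ ⟨⟨?_, ?_⟩, ?_⟩
      · intro k x a
        simp only [update]
        split
        · exact hd'.1.1 k x a
        · exact hpol.1 k x a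
      · intro k x
        simp only [update]
        split
        · exact hd'.1.2 k x
        · exact hpol.2 k x
      · rw [← key_upd dstar d' hpol αc c cT t htN]
        exact hd'.2 t htN
  have ub : ∀ d, isFix N αr αc p r c rT cT B d →
      LPobj N αr d d p r rT ≤ (N : ℝ) * J N αr dstar p r rT := by
    intro d hd
    rw [LPobj_self d hd.1.1]
    exact mul_le_mul_of_nonneg_left (hopt.2 d (feas_of_fix d hd)) (Nat.cast_nonneg N)
  constructor
  · constructor
    · exact ⟨dstar, hfixstar, LPobj_self dstar hpol⟩
    · rintro v ⟨d, hd, rfl⟩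
      exact ub d hd
  · intro d hd heq
    have hN0 : (N : ℝ) ≠ 0 := Nat.cast_ne_zero.mpr hN.ne'
    have hJd : J N αr d p r rT = J N αr dstar p r rT := by
      have h1 := LPobj_self d hd.1.1
      rw [heq] at h1
      exact mul_left_cancel₀ hN0 h1.symm
    exact ⟨feas_of_fix d hd, fun d' hd' => by rw [hJd]; exact hopt.2 d' hd'⟩

end RiskCMDP
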